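/- Let Π be a proof structure all of whose links are tensor links and which has at least one link. If no hypothesis of Π is the main formula of its link, then every link of Π is a tensor (introduction) link for • or for ⊙_k, and the conclusion of Π is the main formula of its link. Hence in any nonempty tensor-only proof structure, either a hypothesis or the conclusion is the main formula of its link. -/

import Mathlib

namespace Displacement

/-! ## String terms -/

/-- Symbols: `none` is the separator `1`, `some w` is a word/variable from a
countably infinite alphabet. -/
abbrev Sym : Type := Option ℕ

/-- String terms: finite sequences of symbols. -/
abbrev Str : Type := List Sym

/-- The sort of a string term: the number of occurrences of the separator `1` in it. -/
def ssort (α : Str) : ℕ := α.count none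

/-- Replace the `i`-th (0-indexed) occurrence of the separator in a string by `β`. -/
def replaceSep : Str → ℕ → Str → Str
  | [], _, _ => []
  | none :: rest, 0, β => β ++ rest
  | none :: rest, Nat.succ i, β => none :: replaceSep rest i β
  | some w :: rest, i, β => some w :: replaceSep rest i β

/-- Wrap indices: the leftmost separator (`>`), the rightmost separator (`<`),
or the `k`-th separator. -/
inductive Idx : Type where
  | fst : Idx
  | lst : Idx
  | nth : ℕ → Idx
deriving DecidableEq, Repr

/-- The wrap operation `α ×ₖ β`: replace the separator occurrence of `α` selected by `k`
by `β`. -/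
def wrap (k : Idx) (α β : Str) : Str :=
  match k with
  | .fst => replaceSep α 0 β
  | .lst => replaceSep α (ssort α - 1) β
  | .nth n => replaceSep α (n - 1) β

/-! ## Formulas -/

/-- Formulas of the Displacement calculus; an atom carries a name and a sort. -/
inductive Form : Type where
  | atom : ℕ → ℕ → Form
  | conc : Form → Form → Form          -- A • B
  | under : Form → Form → Form         -- A \ C
  | over : Form → Form → Form          -- C / B
  | odot : Idx → Form → Form → Form    -- A ⊙ₖ B
  | darr : Idx → Form → Form → Form    -- A ↓ₖ C
  | uarr : Idx → Form → Form → Form    -- C ↑ₖ B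
deriving DecidableEq, Repr

/-- The sort of a formula. -/
def fsort : Form → ℤ
  | .atom _ s => s
  | .conc A B => fsort A + fsort B
  | .under A C => fsort C - fsort A
  | .over C B => fsort C - fsort B
  | .odot _ A B => fsort A + fsort B - 1
  | .darr _ A C => fsort C + 1 - fsort A
  | .uarr _ C B => fsort C + 1 - fsort B

/-- The sort of a formula, as a natural number. -/
def natSort (A : Form) : ℕ := (fsort A).toNat

/-- `k` is a valid separator index for an expression of sort `s`. -/
def validIdx (k : Idx) (s : ℤ) : Prop :=
  match k with
  | .fst => 1 ≤ s
  | .lst => 1 ≤ s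
  | .nth n => 1 ≤ (n : ℤ) ∧ (n : ℤ) ≤ s

/-- Well-sorted formulas: every subformula has nonnegative sort and the left
argument of `⊙ₖ` and `↓ₖ` has sort at least 1 (with `k` a valid index for it). -/
def WellSorted : Form → Prop
  | .atom _ _ => True
  | .conc A B => WellSorted A ∧ WellSorted B
  | .under A C => WellSorted A ∧ WellSorted C ∧ 0 ≤ fsort C - fsort A
  | .over C B => WellSorted C ∧ WellSorted B ∧ 0 ≤ fsort C - fsort B
  | .odot k A B => WellSorted A ∧ WellSorted B ∧ 1 ≤ fsort A ∧ validIdx k (fsort A) ∧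
      0 ≤ fsort A + fsort B - 1
  | .darr k A C => WellSorted A ∧ WellSorted C ∧ 1 ≤ fsort A ∧ validIdx k (fsort A) ∧
      0 ≤ fsort C + 1 - fsort A
  | .uarr k C B => WellSorted C ∧ WellSorted B ∧ validIdx k (fsort C + 1 - fsort B)

/-- `α` is a string term whose sort is the sort of the formula `A`. -/
def Sorted (α : Str) (A : Form) : Prop := (ssort α : ℤ) = fsort A

/-! ## String models -/

/-- The interpretation of formulas in string models, given a valuation of the atoms. -/
def interp (val : ℕ → ℕ → Set Str) : Form → Set Str
  | .atom a s => val a s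
  | .conc A B => {γ | ∃ α ∈ interp val A, ∃ β ∈ interp val B, γ = α ++ β}
  | .under A C => {β | ∀ α ∈ interp val A, α ++ β ∈ interp val C}
  | .over C B => {α | ∀ β ∈ interp val B, α ++ β ∈ interp val C}
  | .odot k A B => {γ | ∃ α ∈ interp val A, ∃ β ∈ interp val B, γ = wrap k α β}
  | .darr k A C => {β | ∀ α ∈ interp val A, wrap k α β ∈ interp val C}
  | .uarr k C B => {α | ∀ β ∈ interp val B, wrap k α β ∈ interp val C}

/-! ## Natural deduction -/

/-- Labelled formulas `α : A`. -/
abbrev LF : Type := Str × Form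

/-- Natural deduction for the Displacement calculus on labelled judgments: a
multiset of labelled hypotheses entails a labelled conclusion.  Hypothesis
withdrawal is rendered by genericity: the introduction rules require a
derivation for every string term of the appropriate sort labelling the
withdrawn hypothesis.  The elimination rules for `•` and `⊙ₖ` use a one-hole
string context `pre ++ _ ++ post`. -/
inductive Deriv : Multiset LF → LF → Prop where
  | ax (α : Str) (A : Form) : Deriv {(α, A)} (α, A)
  | underE {Γ Δ : Multiset LF} {α γ : Str} {A C : Form} :
      Deriv Γ (α, A) → Deriv Δ (γ, .under A C) → Deriv (Γ + Δ) (α ++ γ, C)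
  | underI {Γ : Multiset LF} {γ : Str} {A C : Form} :
      (∀ α : Str, Sorted α A → Deriv ((α, A) ::ₘ Γ) (α ++ γ, C)) →
      Deriv Γ (γ, .under A C)
  | overE {Γ Δ : Multiset LF} {γ β : Str} {B C : Form} :
      Deriv Γ (γ, .over C B) → Deriv Δ (β, B) → Deriv (Γ + Δ) (γ ++ β, C)
  | overI {Γ : Multiset LF} {γ : Str} {B C : Form} :
      (∀ β : Str, Sorted β B → Deriv ((β, B) ::ₘ Γ) (γ ++ β, C)) →
      Deriv Γ (γ, .over C B)
  | concI {Γ Δ : Multiset LF} {α β : Str} {A B : Form} :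
      Deriv Γ (α, A) → Deriv Δ (β, B) → Deriv (Γ + Δ) (α ++ β, .conc A B)
  | concE {Γ Δ : Multiset LF} {δ pre post : Str} {A B C : Form} :
      Deriv Δ (δ, .conc A B) →
      (∀ α β : Str, Sorted α A → Sorted β B →
        Deriv ((α, A) ::ₘ (β, B) ::ₘ Γ) (pre ++ α ++ β ++ post, C)) →
      Deriv (Δ + Γ) (pre ++ δ ++ post, C)
  | darrE {Γ Δ : Multiset LF} {α γ : Str} {k : Idx} {A C : Form} :
      Deriv Γ (α, A) → Deriv Δ (γ, .darr k A C) → Deriv (Γ + Δ) (wrap k α γ, C)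
  | darrI {Γ : Multiset LF} {γ : Str} {k : Idx} {A C : Form} :
      (∀ α : Str, Sorted α A → Deriv ((α, A) ::ₘ Γ) (wrap k α γ, C)) →
      Deriv Γ (γ, .darr k A C)
  | uarrE {Γ Δ : Multiset LF} {γ β : Str} {k : Idx} {B C : Form} :
      Deriv Γ (γ, .uarr k C B) → Deriv Δ (β, B) → Deriv (Γ + Δ) (wrap k γ β, C)
  | uarrI {Γ : Multiset LF} {γ : Str} {k : Idx} {B C : Form} :
      (∀ β : Str, Sorted β B → Deriv ((β, B) ::ₘ Γ) (wrap k γ β, C)) →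
      Deriv Γ (γ, .uarr k C B)
  | odotI {Γ Δ : Multiset LF} {α β : Str} {k : Idx} {A B : Form} :
      Deriv Γ (α, A) → Deriv Δ (β, B) → Deriv (Γ + Δ) (wrap k α β, .odot k A B)
  | odotE {Γ Δ : Multiset LF} {δ pre post : Str} {k : Idx} {A B C : Form} :
      Deriv Δ (δ, .odot k A B) →
      (∀ α β : Str, Sorted α A → Sorted β B →
        Deriv ((α, A) ::ₘ (β, B) ::ₘ Γ) (pre ++ wrap k α β ++ post, C)) →
      Deriv (Δ + Γ) (pre ++ δ ++ post, C)

/-! ## Proof structures -/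

/-- The kinds of links of a proof structure: a tensor link and a par link for
each connective. -/
inductive LKind : Type where
  | tOver | tUnder | tConc
  | tUarr (k : Idx) | tDarr (k : Idx) | tOdot (k : Idx)
  | pOver | pUnder | pConc
  | pUarr (k : Idx) | pDarr (k : Idx) | pOdot (k : Idx)
deriving DecidableEq, Repr

/-- Tensor links. -/
def LKind.IsTensor : LKind → Prop
  | .tOver | .tUnder | .tConc | .tUarr _ | .tDarr _ | .tOdot _ => True
  | _ => False

/-- A link of a proof structure: a kind together with an ordered list of
premisses and an ordered list of conclusions. -/
structure PLink (V : Type) where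
  kind : LKind
  prem : List V
  concl : List V
deriving DecidableEq

/-- The link is a correct instance of the link schema of its kind. -/
def ValidPLink {V : Type} (form : V → Form) (l : PLink V) : Prop :=
  match l.kind with
  | .tOver => ∃ x y z, l.prem = [x, y] ∧ l.concl = [z] ∧ form x = .over (form z) (form y)
  | .tUnder => ∃ x y z, l.prem = [x, y] ∧ l.concl = [z] ∧ form y = .under (form x) (form z)
  | .tConc => ∃ x y z, l.prem = [x, y] ∧ l.concl = [z] ∧ form z = .conc (form x) (form y)
  | .tUarr k => ∃ x y z, l.prem = [x, y] ∧ l.concl = [z] ∧ form x = .uarr k (form z) (form y)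
  | .tDarr k => ∃ x y z, l.prem = [x, y] ∧ l.concl = [z] ∧ form y = .darr k (form x) (form z)
  | .tOdot k => ∃ x y z, l.prem = [x, y] ∧ l.concl = [z] ∧ form z = .odot k (form x) (form y)
  | .pOver => ∃ x y z, l.prem = [x] ∧ l.concl = [y, z] ∧ form y = .over (form x) (form z)
  | .pUnder => ∃ x y z, l.prem = [x] ∧ l.concl = [y, z] ∧ form z = .under (form y) (form x)
  | .pConc => ∃ x y z, l.prem = [x] ∧ l.concl = [y, z] ∧ form x = .conc (form y) (form z)
  | .pUarr k => ∃ x y z, l.prem = [x] ∧ l.concl = [y, z] ∧ form y = .uarr k (form x) (form z)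
  | .pDarr k => ∃ x y z, l.prem = [x] ∧ l.concl = [y, z] ∧ form z = .darr k (form y) (form x)
  | .pOdot k => ∃ x y z, l.prem = [x] ∧ l.concl = [y, z] ∧ form x = .odot k (form y) (form z)

/-- The main formula (vertex) of a link. -/
def PLink.mainv {V : Type} (l : PLink V) : Option V :=
  match l.kind with
  | .tOver => l.prem[0]?
  | .tUnder => l.prem[1]?
  | .tConc => l.concl[0]?
  | .tUarr _ => l.prem[0]?
  | .tDarr _ => l.prem[1]?
  | .tOdot _ => l.concl[0]?
  | .pOver => l.concl[0]?
  | .pUnder => l.concl[1]?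
  | .pConc => l.prem[0]?
  | .pUarr _ => l.concl[0]?
  | .pDarr _ => l.concl[1]?
  | .pOdot _ => l.prem[0]?

/-- A proof structure: a finite set of formula occurrences (vertices `Fin n`
labelled by formulas) and a set of links, each a correct instance of one of
the link schemata, such that every formula is the premiss of at most one link
and the conclusion of at most one link. -/
structure PS where
  n : ℕ
  form : Fin n → Form
  links : List (PLink (Fin n))
  valid : ∀ l ∈ links, ValidPLink form l
  prem_once : ∀ v : Fin n, links.countP (fun l => decide (v ∈ l.prem)) ≤ 1
  concl_once : ∀ v : Fin n, links.countP (fun l => decide (v ∈ l.concl)) ≤ 1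

/-- A hypothesis of a proof structure: a formula which is the conclusion of no link. -/
def PS.IsHyp (P : PS) (v : Fin P.n) : Prop := ∀ l ∈ P.links, v ∉ l.concl

/-- A conclusion of a proof structure: a formula which is the premiss of no link. -/
def PS.IsConcl (P : PS) (v : Fin P.n) : Prop := ∀ l ∈ P.links, v ∉ l.prem

instance (P : PS) : DecidablePred P.IsHyp := fun v => by
  unfold PS.IsHyp; infer_instance

/-- The list of hypotheses of a proof structure. -/
def PS.hypList (P : PS) : List (Fin P.n) :=
  (List.finRange P.n).filter fun v => decide (P.IsHyp v)

/-- The multiset of labelled hypotheses of a proof structure, given a string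
labelling of its vertices. -/
def PS.hyps (P : PS) (lab : Fin P.n → Str) : Multiset LF :=
  ↑(P.hypList.map fun v => (lab v, P.form v))

/-- The vertex `v` occurs in the link `l`. -/
def PLink.touches {V : Type} (l : PLink V) (v : V) : Prop := v ∈ l.prem ∨ v ∈ l.concl

/-- The underlying undirected (incidence) graph of a proof structure, on its
formula vertices and its links. -/
def PS.incGraph (P : PS) : SimpleGraph (Fin P.n ⊕ Fin P.links.length) where
  Adj a b :=
    (∃ v i, a = Sum.inl v ∧ b = Sum.inr i ∧ (P.links.get i).touches v) ∨
    (∃ v i, b = Sum.inl v ∧ a = Sum.inr i ∧ (P.links.get i).touches v)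
  symm := by
    constructor
    rintro a b (⟨v, i, rfl, rfl, h⟩ | ⟨v, i, rfl, rfl, h⟩)
    · exact Or.inr ⟨v, i, rfl, rfl, h⟩
    · exact Or.inl ⟨v, i, rfl, rfl, h⟩
  loopless := by
    constructor
    rintro a (⟨v, i, rfl, h, -⟩ | ⟨v, i, rfl, h, -⟩) <;> simp at h

/-! ## Abstract proof structures -/

/-- A premiss of a comb: either an (internal) vertex or a terminal symbol
(a word or the separator `1`). -/
abbrev Pt : Type := ℕ ⊕ Sym

/-- The sort of a comb premiss, given a sort assignment for the vertices. -/
def ptSort (σ : ℕ → ℕ) : Pt → ℕ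
  | .inl v => σ v
  | .inr none => 1
  | .inr (some _) => 0

/-- The sort of a sequence of comb premisses. -/
def lsort (σ : ℕ → ℕ) (l : List Pt) : ℕ := (l.map (ptSort σ)).sum

/-- Kinds of par links with one auxiliary group (`/`, `\`, `↑ₖ`, `↓ₖ`). -/
inductive Par1Kind : Type where
  | over | under | uarr (k : Idx) | darr (k : Idx)
deriving DecidableEq, Repr

/-- Kinds of par links with two auxiliary groups (`•`, `⊙ₖ`). -/
inductive Par2Kind : Type where
  | conc | odot (k : Idx)
deriving DecidableEq, Repr

/-- Links of abstract proof structures: combs, `×ₖ` tensor links, and par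
links (whose auxiliary conclusions have been split into their endpoint
vertices). -/
inductive ALink : Type where
  | comb (prem : List Pt) (concl : ℕ)
  | tens (k : Idx) (left right concl : ℕ)
  | par1 (κ : Par1Kind) (main prem : ℕ) (aux : List ℕ)
  | par2 (κ : Par2Kind) (main : ℕ) (aux1 aux2 : List ℕ)
deriving DecidableEq, Repr

/-- An abstract proof structure: a multiset of links over vertices `ℕ`,
together with a sort assignment for the vertices. -/
structure APS where
  vsort : ℕ → ℕ
  links : Multiset ALink

/-- The total number of links of an abstract proof structure. -/
def APS.numLinks (A : APS) : ℕ := Multiset.card A.links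

/-- The endpoint vertices of an auxiliary input of sort `n`, interleaved with
`n` separators: `v₀, 1, v₁, 1, …, vₙ`. -/
def sepweave (vs : List ℕ) : List Pt := List.intersperse (Sum.inr none) (vs.map Sum.inl)

/-- The sort side condition of the wrap index `k` on the parts to the left and
to the right of the insertion point. -/
def idxCond (σ : ℕ → ℕ) (k : Idx) (α₁ α₂ : List Pt) : Prop :=
  match k with
  | .fst => lsort σ α₁ = 0
  | .lst => lsort σ α₂ = 0
  | .nth n => lsort σ α₁ = n - 1

/-- The structural contractions `[+]` and `[×ₖ]`. -/
inductive SContract : APS → APS → Prop where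
  | plus (σ : ℕ → ℕ) (rest : Multiset ALink) (γ₁ γ₂ β : List Pt) (v c : ℕ) :
      SContract ⟨σ, .comb β v ::ₘ .comb (γ₁ ++ Sum.inl v :: γ₂) c ::ₘ rest⟩
                ⟨σ, .comb (γ₁ ++ β ++ γ₂) c ::ₘ rest⟩
  | times (σ : ℕ → ℕ) (rest : Multiset ALink) (α₁ α₂ β : List Pt) (k : Idx) (u w v : ℕ) :
      idxCond σ k α₁ α₂ →
      SContract ⟨σ, .comb (α₁ ++ Sum.inr none :: α₂) u ::ₘ .comb β w ::ₘ .tens k u w v ::ₘ rest⟩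
                ⟨σ, .comb (α₁ ++ β ++ α₂) v ::ₘ rest⟩

/-- The logical contractions `[\]`, `[/]`, `[↑ₖ]`, `[↓ₖ]`, `[•]`, `[⊙ₖ]`, one
for each par link. -/
inductive LContract : APS → APS → Prop where
  | lunder (σ : ℕ → ℕ) (rest : Multiset ALink) (β : List Pt) (vs : List ℕ) (t m : ℕ) :
      vs ≠ [] →
      LContract ⟨σ, .comb (sepweave vs ++ β) t ::ₘ .par1 .under m t vs ::ₘ rest⟩
                ⟨σ, .comb β m ::ₘ rest⟩
  | lover (σ : ℕ → ℕ) (rest : Multiset ALink) (β : List Pt) (vs : List ℕ) (t m : ℕ) :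
      vs ≠ [] →
      LContract ⟨σ, .comb (β ++ sepweave vs) t ::ₘ .par1 .over m t vs ::ₘ rest⟩
                ⟨σ, .comb β m ::ₘ rest⟩
  | luarr (σ : ℕ → ℕ) (rest : Multiset ALink) (α₁ α₂ : List Pt) (vs : List ℕ)
      (k : Idx) (t m : ℕ) :
      vs ≠ [] → idxCond σ k α₁ α₂ →
      LContract ⟨σ, .comb (α₁ ++ sepweave vs ++ α₂) t ::ₘ .par1 (.uarr k) m t vs ::ₘ rest⟩
                ⟨σ, .comb (α₁ ++ Sum.inr none :: α₂) m ::ₘ rest⟩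
  | ldarr (σ : ℕ → ℕ) (rest : Multiset ALink) (β : List Pt) (ls rs : List ℕ)
      (k : Idx) (t m : ℕ) :
      ls ≠ [] → rs ≠ [] → idxCond σ k (sepweave ls) (sepweave rs) →
      LContract ⟨σ, .comb (sepweave ls ++ β ++ sepweave rs) t ::ₘ
                      .par1 (.darr k) m t (ls ++ rs) ::ₘ rest⟩
                ⟨σ, .comb β m ::ₘ rest⟩
  | lconc (σ : ℕ → ℕ) (rest : Multiset ALink) (γ₁ γ₂ : List Pt) (vs ws : List ℕ) (c m : ℕ) :
      vs ≠ [] → ws ≠ [] →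
      LContract ⟨σ, .comb (γ₁ ++ sepweave vs ++ sepweave ws ++ γ₂) c ::ₘ
                      .par2 .conc m vs ws ::ₘ rest⟩
                ⟨σ, .comb (γ₁ ++ Sum.inl m :: γ₂) c ::ₘ rest⟩
  | lodot (σ : ℕ → ℕ) (rest : Multiset ALink) (γ₁ γ₂ : List Pt) (ls rs ws : List ℕ)
      (k : Idx) (c m : ℕ) :
      ls ≠ [] → rs ≠ [] → ws ≠ [] → idxCond σ k (sepweave ls) (sepweave rs) →
      LContract ⟨σ, .comb (γ₁ ++ sepweave ls ++ sepweave ws ++ sepweave rs ++ γ₂) c ::ₘ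
                      .par2 (.odot k) m (ls ++ rs) ws ::ₘ rest⟩
                ⟨σ, .comb (γ₁ ++ Sum.inl m :: γ₂) c ::ₘ rest⟩

/-- The contraction relation: structural and logical contractions. -/
def Contract (A B : APS) : Prop := SContract A B ∨ LContract A B

/-- An abstract proof structure which is a single comb. -/
def IsComb (A : APS) : Prop := ∃ (prem : List Pt) (c : ℕ), A.links = {ALink.comb prem c}

/-- `A` contracts in at most `n` steps to `B`. -/
def StepsTo : ℕ → APS → APS → Prop
  | 0, A, B => A = B
  | n + 1, A, B => A = B ∨ ∃ C, Contract A C ∧ StepsTo n C B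

/-- `A` contracts (in zero or more steps) to a comb. -/
def ContractsToComb (A : APS) : Prop :=
  ∃ B, Relation.ReflTransGen Contract A B ∧ IsComb B

/-! ## Translation of proof structures to abstract proof structures -/

/-- The auxiliary endpoint vertices introduced by a link of an abstract proof
structure. -/
def ALink.auxVerts : ALink → List ℕ
  | .par1 _ _ _ e => e
  | .par2 _ _ e₁ e₂ => e₁ ++ e₂
  | _ => []

/-- The translation of a single link of a proof structure into links of an
abstract proof structure: the `+` tensor links become two-premiss combs, the
`×ₖ` tensor links are kept, and each par link keeps its main formula and its
premiss while its auxiliary conclusion of sort `n` is split into `n + 1` fresh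
endpoint vertices which are also the premisses (interleaved with `n`
separators) of a new comb concluding in the auxiliary formula. -/
def LinkTrans {V : Type} (form : V → Form) (emb : V → ℕ) (l : PLink V)
    (out : List ALink) : Prop :=
  match l.kind with
  | .tOver => ∃ x y z, l.prem = [x, y] ∧ l.concl = [z] ∧
      out = [.comb [Sum.inl (emb x), Sum.inl (emb y)] (emb z)]
  | .tUnder => ∃ x y z, l.prem = [x, y] ∧ l.concl = [z] ∧
      out = [.comb [Sum.inl (emb x), Sum.inl (emb y)] (emb z)]
  | .tConc => ∃ x y z, l.prem = [x, y] ∧ l.concl = [z] ∧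
      out = [.comb [Sum.inl (emb x), Sum.inl (emb y)] (emb z)]
  | .tUarr k => ∃ x y z, l.prem = [x, y] ∧ l.concl = [z] ∧
      out = [.tens k (emb x) (emb y) (emb z)]
  | .tDarr k => ∃ x y z, l.prem = [x, y] ∧ l.concl = [z] ∧
      out = [.tens k (emb x) (emb y) (emb z)]
  | .tOdot k => ∃ x y z, l.prem = [x, y] ∧ l.concl = [z] ∧
      out = [.tens k (emb x) (emb y) (emb z)]
  | .pOver => ∃ x y z e, l.prem = [x] ∧ l.concl = [y, z] ∧
      e.length = natSort (form z) + 1 ∧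
      out = [.par1 .over (emb y) (emb x) e, .comb (sepweave e) (emb z)]
  | .pUnder => ∃ x y z e, l.prem = [x] ∧ l.concl = [y, z] ∧
      e.length = natSort (form y) + 1 ∧
      out = [.par1 .under (emb z) (emb x) e, .comb (sepweave e) (emb y)]
  | .pUarr k => ∃ x y z e, l.prem = [x] ∧ l.concl = [y, z] ∧
      e.length = natSort (form z) + 1 ∧
      out = [.par1 (.uarr k) (emb y) (emb x) e, .comb (sepweave e) (emb z)]
  | .pDarr k => ∃ x y z e, l.prem = [x] ∧ l.concl = [y, z] ∧
      e.length = natSort (form y) + 1 ∧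
      out = [.par1 (.darr k) (emb z) (emb x) e, .comb (sepweave e) (emb y)]
  | .pConc => ∃ x y z e₁ e₂, l.prem = [x] ∧ l.concl = [y, z] ∧
      e₁.length = natSort (form y) + 1 ∧ e₂.length = natSort (form z) + 1 ∧
      out = [.par2 .conc (emb x) e₁ e₂, .comb (sepweave e₁) (emb y),
             .comb (sepweave e₂) (emb z)]
  | .pOdot k => ∃ x y z e₁ e₂, l.prem = [x] ∧ l.concl = [y, z] ∧
      e₁.length = natSort (form y) + 1 ∧ e₂.length = natSort (form z) + 1 ∧
      out = [.par2 (.odot k) (emb x) e₁ e₂, .comb (sepweave e₁) (emb y),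
             .comb (sepweave e₂) (emb z)]

/-- `A` is the abstract proof structure of the proof structure `P` (with
hypothesis labelling `lab`), along the vertex embedding `emb`: all links are
translated, the auxiliary endpoint vertices are fresh and pairwise distinct,
and every hypothesis (lexical input) labelled `α` becomes a comb whose
premisses are the symbols of `α`. -/
def Translation (P : PS) (lab : Fin P.n → Str) (emb : Fin P.n → ℕ) (A : APS) : Prop :=
  Function.Injective emb ∧
  (∀ v, A.vsort (emb v) = natSort (P.form v)) ∧
  (∀ v, P.IsHyp v → ssort (lab v) = natSort (P.form v)) ∧
  ∃ out : List (List ALink),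
    List.Forall₂ (LinkTrans P.form emb) P.links out ∧
    ((out.flatten.map ALink.auxVerts).flatten).Nodup ∧
    (∀ w ∈ (out.flatten.map ALink.auxVerts).flatten,
      (∀ v, emb v ≠ w) ∧ A.vsort w = 0) ∧
    A.links = (out.flatten : Multiset ALink) +
      ↑(P.hypList.map fun v => ALink.comb ((lab v).map Sum.inr) (emb v))


/-! Each tensor link passes from its main formula to strictly smaller formulas.  The main
formula of a `/`, `\`, `↑ₖ` or `↓ₖ` link is a premiss that is not a product formula, so
unless it is a hypothesis it is the conclusion of another such link, whose main formula is
larger still; a main formula of maximal size rules this out.  Once all links are `•` or `⊙ₖ`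
links, a link conclusion of maximal size can be the premiss of no further link. -/

/-- The tensor links whose main formula is their conclusion. -/
def LKind.IsProduct (κ : LKind) : Prop := κ = .tConc ∨ ∃ k, κ = .tOdot k

def Form.IsProduct : Form → Prop
  | .conc _ _ | .odot _ _ _ => True
  | _ => False

section Shape

variable {V : Type} {form : V → Form} {l : PLink V}

theorem ValidPLink.exists_of_isProduct (hv : ValidPLink form l) (hk : l.kind.IsProduct) :
    ∃ x y z, l.prem = [x, y] ∧ l.concl = [z] ∧ l.mainv = some z ∧ (form z).IsProduct ∧
      sizeOf (form x) < sizeOf (form z) ∧ sizeOf (form y) < sizeOf (form z) := by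
  obtain ⟨κ, p, c⟩ := l
  rcases hk with rfl | ⟨k, rfl⟩ <;>
  · obtain ⟨x, y, z, rfl, rfl, hz⟩ := hv
    refine ⟨x, y, z, rfl, rfl, rfl, by simp [hz, Form.IsProduct], ?_, ?_⟩ <;>
      simp only [hz, Form.conc.sizeOf_spec, Form.odot.sizeOf_spec] <;> omega

theorem ValidPLink.mainv_eq_of_isProduct (hv : ValidPLink form l) (hk : l.kind.IsProduct)
    {v : V} (hvl : v ∈ l.concl) : l.mainv = some v := by
  obtain ⟨_, _, z, -, hc, hm, -⟩ := hv.exists_of_isProduct hk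
  rw [hc, List.mem_singleton] at hvl
  rwa [hvl]

theorem ValidPLink.exists_of_not_isProduct (hv : ValidPLink form l) (ht : l.kind.IsTensor)
    (hk : ¬ l.kind.IsProduct) :
    ∃ m z, m ∈ l.prem ∧ l.concl = [z] ∧ l.mainv = some m ∧ ¬ (form m).IsProduct ∧
      sizeOf (form z) < sizeOf (form m) := by
  obtain ⟨κ, p, c⟩ := l
  cases κ <;>
    simp only [LKind.IsTensor, LKind.IsProduct, reduceCtorEq, LKind.tOdot.injEq, exists_eq',
      exists_false, or_self, or_false, or_true, not_true_eq_false] at ht hk <;>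
    obtain ⟨x, y, z, rfl, rfl, hm⟩ := hv
  · exact ⟨x, z, by simp, rfl, rfl, by simp [hm, Form.IsProduct],
      by rw [hm, Form.over.sizeOf_spec]; omega⟩
  · exact ⟨y, z, by simp, rfl, rfl, by simp [hm, Form.IsProduct],
      by rw [hm, Form.under.sizeOf_spec]; omega⟩
  · exact ⟨x, z, by simp, rfl, rfl, by simp [hm, Form.IsProduct],
      by rw [hm, Form.uarr.sizeOf_spec]; omega⟩
  · exact ⟨y, z, by simp, rfl, rfl, by simp [hm, Form.IsProduct],
      by rw [hm, Form.darr.sizeOf_spec]; omega⟩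

end Shape

namespace PS

variable (P : PS)

theorem exists_mainv_sizeOf_lt (hT : ∀ l ∈ P.links, l.kind.IsTensor) {l : PLink (Fin P.n)}
    (hl : l ∈ P.links) (hk : ¬ l.kind.IsProduct) {m : Fin P.n} (hm : l.mainv = some m)
    (hH : ¬ P.IsHyp m) :
    ∃ l' ∈ P.links, ¬ l'.kind.IsProduct ∧ ∃ m', l'.mainv = some m' ∧
      sizeOf (P.form m) < sizeOf (P.form m') := by
  obtain ⟨m₀, -, -, -, hm₀, hnotProd, -⟩ :=
    (P.valid l hl).exists_of_not_isProduct (hT l hl) hk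
  obtain rfl : m₀ = m := Option.some_injective _ (hm₀.symm.trans hm)
  simp only [IsHyp, not_forall, not_not] at hH
  obtain ⟨l', hl', hml'⟩ := hH
  by_cases hk' : l'.kind.IsProduct
  · obtain ⟨-, -, z', -, hc', -, hprod, -⟩ := (P.valid l' hl').exists_of_isProduct hk'
    rw [hc', List.mem_singleton] at hml'
    exact absurd (hml' ▸ hprod) hnotProd
  · obtain ⟨m', z', -, hc', hm', -, hlt⟩ :=
      (P.valid l' hl').exists_of_not_isProduct (hT l' hl') hk'
    rw [hc', List.mem_singleton] at hml'
    exact ⟨l', hl', hk', m', hm', hml' ▸ hlt⟩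

theorem forall_isProduct_of_forall_isHyp (hT : ∀ l ∈ P.links, l.kind.IsTensor)
    (hH : ∀ v, P.IsHyp v → ∀ l ∈ P.links, v ∈ l.prem → l.mainv ≠ some v) :
    ∀ l ∈ P.links, l.kind.IsProduct := by
  classical
  by_contra! hbad
  obtain ⟨l₀, hl₀, hk₀⟩ := hbad
  let S := Finset.univ.filter fun m => ∃ l ∈ P.links, ¬ l.kind.IsProduct ∧ l.mainv = some m
  obtain ⟨m₀, -, -, -, hm₀, -⟩ := (P.valid l₀ hl₀).exists_of_not_isProduct (hT l₀ hl₀) hk₀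
  obtain ⟨m, hmS, hmax⟩ := S.exists_max_image (fun m => sizeOf (P.form m))
    ⟨m₀, Finset.mem_filter.2 ⟨Finset.mem_univ _, l₀, hl₀, hk₀, hm₀⟩⟩
  obtain ⟨l, hl, hk, hm⟩ := (Finset.mem_filter.1 hmS).2
  obtain ⟨m', -, hprem, -, hm', -⟩ := (P.valid l hl).exists_of_not_isProduct (hT l hl) hk
  obtain rfl : m' = m := Option.some_injective _ (hm'.symm.trans hm)
  obtain ⟨l', hl', hk', m'', hm'', hlt⟩ :=
    P.exists_mainv_sizeOf_lt hT hl hk hm fun h => hH m' h l hl hprem hm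
  exact (hmax m'' (Finset.mem_filter.2 ⟨Finset.mem_univ _, l', hl', hk', hm''⟩)).not_gt hlt

theorem exists_isConcl_mainv_eq (hne : P.links ≠ []) (hprod : ∀ l ∈ P.links, l.kind.IsProduct) :
    ∃ v, P.IsConcl v ∧ ∃ l ∈ P.links, v ∈ l.concl ∧ l.mainv = some v := by
  classical
  let S := Finset.univ.filter fun v => ∃ l ∈ P.links, v ∈ l.concl
  obtain ⟨l₀, hl₀⟩ := List.exists_mem_of_ne_nil _ hne
  obtain ⟨-, -, z₀, -, hc₀, -⟩ := (P.valid l₀ hl₀).exists_of_isProduct (hprod l₀ hl₀)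
  obtain ⟨z, hzS, hmax⟩ := S.exists_max_image (fun v => sizeOf (P.form v))
    ⟨z₀, Finset.mem_filter.2 ⟨Finset.mem_univ _, l₀, hl₀, by simp [hc₀]⟩⟩
  obtain ⟨l, hl, hz⟩ := (Finset.mem_filter.1 hzS).2
  refine ⟨z, fun l' hl' hzl' => ?_, l, hl, hz,
    (P.valid l hl).mainv_eq_of_isProduct (hprod l hl) hz⟩
  obtain ⟨x, y, z', hp, hc, -, -, hx, hy⟩ :=
    (P.valid l' hl').exists_of_isProduct (hprod l' hl')
  have hle := hmax z' (Finset.mem_filter.2 ⟨Finset.mem_univ _, l', hl', by simp [hc]⟩)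
  rw [hp, List.mem_pair] at hzl'
  rcases hzl' with rfl | rfl <;> omega

end PS

/-- Let `Π` be a proof structure all of whose links are tensor
links and which has at least one link.  If no hypothesis of `Π` is the main
formula of its link, then every link of `Π` is a tensor (introduction) link
for `•` or for `⊙ₖ`, and the conclusion of `Π` is the main formula of its
link.  Hence in any nonempty tensor-only proof structure, either a hypothesis
or the conclusion is the main formula of its link. -/
theorem tensor_only_main_formula :
    (∀ P : PS, P.links ≠ [] → (∀ l ∈ P.links, l.kind.IsTensor) →
      (∀ v : Fin P.n, P.IsHyp v → ∀ l ∈ P.links, v ∈ l.prem → l.mainv ≠ some v) →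
      (∀ l ∈ P.links, l.kind = .tConc ∨ ∃ k, l.kind = .tOdot k) ∧
      (∀ v : Fin P.n, P.IsConcl v → ∀ l ∈ P.links, v ∈ l.concl → l.mainv = some v)) ∧
    (∀ P : PS, P.links ≠ [] → (∀ l ∈ P.links, l.kind.IsTensor) →
      (∃ v : Fin P.n, P.IsHyp v ∧ ∃ l ∈ P.links, v ∈ l.prem ∧ l.mainv = some v) ∨
      (∃ v : Fin P.n, P.IsConcl v ∧ ∃ l ∈ P.links, v ∈ l.concl ∧ l.mainv = some v)) := by
  refine ⟨fun P _ hT hH => ?_, fun P hne hT => ?_⟩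
  · have hprod := P.forall_isProduct_of_forall_isHyp hT hH
    exact ⟨hprod, fun v _ l hl hv => (P.valid l hl).mainv_eq_of_isProduct (hprod l hl) hv⟩
  · by_cases h : ∃ v, P.IsHyp v ∧ ∃ l ∈ P.links, v ∈ l.prem ∧ l.mainv = some v
    · exact Or.inl h
    · push Not at h
      exact Or.inr (P.exists_isConcl_mainv_eq hne (P.forall_isProduct_of_forall_isHyp hT h))

end Displacement
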